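/- Reduction to Max-Reward-Light (submodular case, improved constant): Let (A, f, c) be a multi-agent contract instance with monotone submodular f and A nonempty, let B ∈ (0,1] be a budget, let φ be a BEST objective, and let γ ≥ 1. Suppose S ⊆ L satisfies p(S) ≤ B and γ·f(S) ≥ Max-Reward-Light(B). Then there exists a set T ⊆ A with p(T) ≤ B, where T is either a singleton or a subset of S, such that (6γ + 1)·φ(T) ≥ Max-φ(B). -/

import Mathlib

open scoped BigOperators ENNReal
open Finset

/-- Marginal contribution of agent `i` to set `S`: `f_S(i) = f(S) - f(S \ {i})`. -/
noncomputable def marginal {α : Type*} [DecidableEq α] (f : Finset α → ℝ) (S : Finset α)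
    (i : α) : ℝ :=
  f S - f (S.erase i)

/-- Payment needed to incentivize `S`, valued in `[0,∞]`, with the conventions
`0/0 = 0` and `x/0 = ∞` for `x > 0` (these hold for ENNReal division). -/
noncomputable def payment {α : Type*} [DecidableEq α] (f : Finset α → ℝ) (c : α → ℝ)
    (S : Finset α) : ℝ≥0∞ :=
  ∑ i ∈ S, ENNReal.ofReal (c i) / ENNReal.ofReal (marginal f S i)

/-- The principal's profit from incentivizing `S`: `g(S) = (1 - p(S)) · f(S)`. -/
noncomputable def profit {α : Type*} [DecidableEq α] (f : Finset α → ℝ) (c : α → ℝ)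
    (S : Finset α) : ℝ :=
  (1 - (payment f c S).toReal) * f S

/-- `f` is monotone. -/
def IsMonotoneFn {α : Type*} (f : Finset α → ℝ) : Prop :=
  ∀ ⦃S T : Finset α⦄, S ⊆ T → f S ≤ f T

/-- `f` is subadditive. -/
def IsSubadditive {α : Type*} [DecidableEq α] (f : Finset α → ℝ) : Prop :=
  ∀ S T : Finset α, f (S ∪ T) ≤ f S + f T

/-- `f` is submodular (decreasing marginal values). -/
def IsSubmodular {α : Type*} [DecidableEq α] (f : Finset α → ℝ) : Prop :=
  ∀ ⦃S T : Finset α⦄, S ⊆ T → ∀ i ∉ T, f (insert i T) - f T ≤ f (insert i S) - f S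

/-- `f` is additive. -/
def IsAdditive {α : Type*} [DecidableEq α] (f : Finset α → ℝ) : Prop :=
  ∀ S : Finset α, f S = ∑ i ∈ S, f {i}

/-- `f` is XOS: a finite max of nonnegative additive functions. -/
def IsXOS {α : Type*} (f : Finset α → ℝ) : Prop :=
  ∃ (k : ℕ) (a : Fin (k + 1) → α → ℝ),
    (∀ j i, 0 ≤ a j i) ∧
    ∀ S : Finset α, f S = Finset.univ.sup' Finset.univ_nonempty (fun j => ∑ i ∈ S, a j i)

/-- Agent `i` is light: it can be incentivized with payment at most `1/2`. -/
def isLight {α : Type*} [DecidableEq α] (f : Finset α → ℝ) (c : α → ℝ) (i : α) : Prop :=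
  payment f c {i} ≤ ENNReal.ofReal (1 / 2)

/-- `S` is budget-feasible for budget `B`. -/
def feasible {α : Type*} [DecidableEq α] (f : Finset α → ℝ) (c : α → ℝ) (B : ℝ)
    (S : Finset α) : Prop :=
  payment f c S ≤ ENNReal.ofReal B

/-- `S` is a budget-feasible set of light agents. -/
def feasibleLight {α : Type*} [DecidableEq α] (f : Finset α → ℝ) (c : α → ℝ) (B : ℝ)
    (S : Finset α) : Prop :=
  (∀ i ∈ S, isLight f c i) ∧ payment f c S ≤ ENNReal.ofReal B

/-- The maximum (supremum) value of objective `φ` over sets satisfying `P`. -/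
noncomputable def maxVal {α : Type*} (φ : Finset α → ℝ) (P : Finset α → Prop) : ℝ :=
  sSup (φ '' {S | P S})

/-- `φ` is a BEST objective for the instance `(f, c)`: it is nonnegative, sandwiched between
profit and reward, and satisfies `φ(S) ≤ f(S \ {i}) + φ({i})` for `i ∈ S`. -/
def IsBEST {α : Type*} [DecidableEq α] (f : Finset α → ℝ) (c : α → ℝ)
    (φ : Finset α → ℝ) : Prop :=
  (∀ S, 0 ≤ φ S) ∧
  (∀ S, φ S ≤ f S) ∧
  (∀ S, payment f c S ≤ 1 → (1 - (payment f c S).toReal) * f S ≤ φ S) ∧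
  (∀ S, ∀ i ∈ S, φ S ≤ f (S.erase i) + φ {i})

/-- `φ` is a BEST objective for the instance `(f, c)` restricted to sets satisfying `P`. -/
def IsBESTOn {α : Type*} [DecidableEq α] (f : Finset α → ℝ) (c : α → ℝ)
    (P : Finset α → Prop) (φ : Finset α → ℝ) : Prop :=
  (∀ S, P S → 0 ≤ φ S) ∧
  (∀ S, P S → φ S ≤ f S) ∧
  (∀ S, P S → payment f c S ≤ 1 → (1 - (payment f c S).toReal) * f S ≤ φ S) ∧
  (∀ S, P S → ∀ i ∈ S, φ S ≤ f (S.erase i) + φ {i})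


/-!
Let `O` be a `φ`-optimal feasible set. Marginals only shrink as the team grows, so an agent
of `O` costs at least its stand-alone payment; as `p(O) ≤ 1`, at most one agent `i` of `O` is
heavy, `O ∖ {i}` is a feasible light set, and `φ(O) ≤ f(O ∖ {i}) + φ({i}) ≤ γ f(S) + φ({i})`.

To bound `f(S)`, price every agent of `S` at the marginal it has in `S`: these prices add up
to `p(S) ≤ 1` and bound the payment of any subteam. Unless `S` itself costs at most `1/2`,
a largest subteam `P` of price `≤ 1/2`, one further (light) agent `j`, and the rest
`S ∖ (P ∪ {j})`, whose price is then `< 1/2`, cover `S`. By subadditivity one of them, `T`,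
has `f(S) ≤ 3 f(T)`, and its payment `≤ 1/2` gives `f(T) ≤ 2 φ(T)`. Altogether
`φ(O) ≤ 6γ φ(T) + φ({i})`.
-/
section Weights

variable {α : Type*} [DecidableEq α]

lemma exists_subset_sum_le_forall_lt {M : Type*} [AddCommMonoid M] [LinearOrder M]
    (w : α → M) {b : M} (hb : 0 ≤ b) (S : Finset α) :
    ∃ P ⊆ S, ∑ i ∈ P, w i ≤ b ∧ ∀ j ∈ S, j ∉ P → b < ∑ i ∈ P, w i + w j := by
  obtain ⟨P, hP, hmax⟩ := Finset.exists_max_image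
    (S.powerset.filter fun P => ∑ i ∈ P, w i ≤ b) Finset.card ⟨∅, by simpa using hb⟩
  rw [Finset.mem_filter, Finset.mem_powerset] at hP
  refine ⟨P, hP.1, hP.2, fun j hjS hjP => lt_of_not_ge fun hle => ?_⟩
  have hins := hmax (insert j P) <| by
    rw [Finset.mem_filter, Finset.mem_powerset, Finset.sum_insert hjP, add_comm]
    exact ⟨Finset.insert_subset hjS hP.1, hle⟩
  rw [Finset.card_insert_of_notMem hjP] at hins
  omega

lemma exists_split_sum_le_half (w : α → ℝ≥0∞) {S : Finset α} (hS : ∑ i ∈ S, w i ≤ 1) :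
    ∑ i ∈ S, w i ≤ 2⁻¹ ∨ ∃ P ⊆ S, ∃ j ∈ S, j ∉ P ∧
      ∑ i ∈ P, w i ≤ 2⁻¹ ∧ ∑ i ∈ S \ insert j P, w i ≤ 2⁻¹ := by
  obtain ⟨P, hPS, hP, hmax⟩ := exists_subset_sum_le_forall_lt w zero_le S
  by_cases hSP : S ⊆ P
  · exact Or.inl ((Finset.sum_le_sum_of_subset hSP).trans hP)
  obtain ⟨j, hjS, hjP⟩ := Finset.not_subset.mp hSP
  refine Or.inr ⟨P, hPS, j, hjS, hjP, hP, le_of_not_gt fun hlt => ?_⟩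
  have hsplit := Finset.sum_sdiff (f := w) (Finset.insert_subset hjS hPS)
  rw [Finset.sum_insert hjP, add_comm (w j)] at hsplit
  have := ENNReal.add_lt_add_of_le_of_lt (by simp) hlt.le (hmax j hjS hjP)
  rw [ENNReal.inv_two_add_inv_two, hsplit] at this
  exact this.not_ge hS

end Weights

section Payment

variable {α : Type*} [DecidableEq α] {f : Finset α → ℝ} {c : α → ℝ} {S T : Finset α} {i j : α}

noncomputable def paymentIn (f : Finset α → ℝ) (c : α → ℝ) (S T : Finset α) : ℝ≥0∞ :=
  ∑ i ∈ T, ENNReal.ofReal (c i) / ENNReal.ofReal (marginal f S i)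

lemma marginal_le_of_subset (hsub : IsSubmodular f) (hTS : T ⊆ S) (hi : i ∈ T) :
    marginal f S i ≤ marginal f T i := by
  have h := hsub (Finset.erase_subset_erase i hTS) i (Finset.notMem_erase i S)
  rwa [Finset.insert_erase (hTS hi), Finset.insert_erase hi] at h

lemma payment_le_paymentIn (hsub : IsSubmodular f) (hTS : T ⊆ S) :
    payment f c T ≤ paymentIn f c S T :=
  Finset.sum_le_sum fun _ hi =>
    ENNReal.div_le_div_left (ENNReal.ofReal_le_ofReal (marginal_le_of_subset hsub hTS hi)) _

lemma payment_mono (hsub : IsSubmodular f) (hTS : T ⊆ S) : payment f c T ≤ payment f c S :=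
  (payment_le_paymentIn hsub hTS).trans (Finset.sum_le_sum_of_subset hTS)

lemma payment_singleton_add_le (hsub : IsSubmodular f) (hi : i ∈ S) (hj : j ∈ S) (hij : i ≠ j) :
    payment f c {i} + payment f c {j} ≤ payment f c S :=
  calc payment f c {i} + payment f c {j} ≤ paymentIn f c S {i} + paymentIn f c S {j} :=
        add_le_add (payment_le_paymentIn hsub (Finset.singleton_subset_iff.2 hi))
          (payment_le_paymentIn hsub (Finset.singleton_subset_iff.2 hj))
    _ = paymentIn f c S {i, j} := by
        simp only [paymentIn, Finset.sum_singleton, Finset.sum_pair hij]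
    _ ≤ payment f c S :=
        Finset.sum_le_sum_of_subset (Finset.insert_subset hi (Finset.singleton_subset_iff.2 hj))

lemma eq_of_not_isLight (hsub : IsSubmodular f) (hS : payment f c S ≤ 1) (hi : i ∈ S) (hj : j ∈ S)
    (hil : ¬ isLight f c i) (hjl : ¬ isLight f c j) : i = j := by
  by_contra hij
  have h := ENNReal.add_lt_add (not_le.1 hil) (not_le.1 hjl)
  rw [show ENNReal.ofReal (1 / 2) = 2⁻¹ by simp, ENNReal.inv_two_add_inv_two] at h
  exact (h.trans_le (payment_singleton_add_le hsub hi hj hij)).not_ge hS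

lemma forall_isLight_or_exists_forall_erase_isLight (hsub : IsSubmodular f)
    (hS : payment f c S ≤ 1) :
    (∀ i ∈ S, isLight f c i) ∨ ∃ i ∈ S, ∀ j ∈ S.erase i, isLight f c j := by
  by_cases hheavy : ∃ i ∈ S, ¬ isLight f c i
  · obtain ⟨i, hiS, hi⟩ := hheavy
    refine Or.inr ⟨i, hiS, fun j hj => by_contra fun hj' => ?_⟩
    exact (Finset.mem_erase.1 hj).1 (eq_of_not_isLight hsub hS (Finset.mem_erase.1 hj).2 hiS hj' hi)
  · push Not at hheavy
    exact Or.inl hheavy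

end Payment

lemma IsSubmodular.isSubadditive {α : Type*} [DecidableEq α] {f : Finset α → ℝ}
    (hsub : IsSubmodular f) (hmono : IsMonotoneFn f) (h0 : 0 ≤ f ∅) : IsSubadditive f := by
  intro A B
  induction B using Finset.induction_on with
  | empty => simpa using h0
  | insert i B hiB ih =>
    rw [Finset.union_insert]
    by_cases hiA : i ∈ A ∪ B
    · rw [Finset.insert_eq_self.2 hiA]
      linarith [hmono (Finset.subset_insert i B)]
    · linarith [hsub Finset.subset_union_right i hiA]

lemma exists_subset_payment_le_half_reward_le {α : Type*} [DecidableEq α] {f : Finset α → ℝ}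
    {c : α → ℝ} {S : Finset α} (hf : ∀ T, 0 ≤ f T) (hmono : IsMonotoneFn f)
    (hsub : IsSubmodular f) (hSL : ∀ i ∈ S, isLight f c i) (hS : payment f c S ≤ 1) :
    ∃ T ⊆ S, payment f c T ≤ ENNReal.ofReal (1 / 2) ∧ f S ≤ 3 * f T := by
  have hhalf : ENNReal.ofReal (1 / 2) = 2⁻¹ := by simp
  rcases exists_split_sum_le_half _ hS with hS' | ⟨P, hPS, j, hjS, hjP, hP, hR⟩
  · exact ⟨S, subset_rfl, hS'.trans_eq hhalf.symm, by linarith [hf S]⟩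
  set R := S \ insert j P
  have hadd := hsub.isSubadditive hmono (hf ∅)
  have hcover : f S ≤ f {j} + f P + f R :=
    calc f S = f ({j} ∪ P ∪ R) := by
          rw [← Finset.insert_eq, Finset.union_sdiff_of_subset (Finset.insert_subset hjS hPS)]
      _ ≤ f ({j} ∪ P) + f R := hadd _ _
      _ ≤ f {j} + f P + f R := by linarith [hadd {j} P]
  have hpay {T : Finset α} (hTS : T ⊆ S) (hT : paymentIn f c S T ≤ 2⁻¹) :
      payment f c T ≤ ENNReal.ofReal (1 / 2) :=
    (payment_le_paymentIn hsub hTS).trans (hT.trans_eq hhalf.symm)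
  have hR' : R ⊆ S := Finset.sdiff_subset
  have hbest : f S ≤ 3 * f {j} ∨ f S ≤ 3 * f P ∨ f S ≤ 3 * f R := by
    by_contra! h
    linarith [h.1, h.2.1, h.2.2]
  rcases hbest with h | h | h
  · exact ⟨{j}, Finset.singleton_subset_iff.2 hjS, hSL j hjS, h⟩
  · exact ⟨P, hPS, hpay hPS hP, h⟩
  · exact ⟨R, hR', hpay hR' hR, h⟩

lemma IsBEST.reward_le_two_mul {α : Type*} [DecidableEq α] {f : Finset α → ℝ} {c : α → ℝ}
    {φ : Finset α → ℝ} (hφ : IsBEST f c φ) {T : Finset α} (hf : 0 ≤ f T)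
    (hT : payment f c T ≤ ENNReal.ofReal (1 / 2)) : f T ≤ 2 * φ T := by
  have hp : (payment f c T).toReal ≤ 1 / 2 := ENNReal.toReal_le_of_le_ofReal (by norm_num) hT
  have := hφ.2.2.1 T (hT.trans (ENNReal.ofReal_le_one.2 (by norm_num)))
  nlinarith

section MaxVal

variable {α : Type*} [Finite α] {φ : Finset α → ℝ} {P : Finset α → Prop}

lemma le_maxVal {S : Finset α} (hS : P S) : φ S ≤ maxVal φ P :=
  le_csSup (Set.toFinite _).bddAbove ⟨S, hS, rfl⟩

lemma exists_maxVal_le (hP : ∃ S, P S) : ∃ S, P S ∧ maxVal φ P ≤ φ S := by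
  obtain ⟨S, hS, hmax⟩ := Set.exists_max_image {S | P S} φ (Set.toFinite _) hP
  exact ⟨S, hS, csSup_le (Set.Nonempty.image φ hP) (Set.forall_mem_image.2 hmax)⟩

end MaxVal

theorem reduction_to_mrl_submodular_general {α : Type*} [DecidableEq α] [Fintype α]
    (f : Finset α → ℝ) (c : α → ℝ) (φ : Finset α → ℝ)
    (hf01 : ∀ S, f S ∈ Set.Icc (0 : ℝ) 1)
    (hmono : IsMonotoneFn f) (hsubmod : IsSubmodular f)
    (hφ : IsBEST f c φ)
    (B : ℝ) (hB1 : B ≤ 1)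
    (γ : ℝ) (hγ : 1 ≤ γ)
    (S : Finset α) (hSL : ∀ i ∈ S, isLight f c i)
    (hSfeas : payment f c S ≤ ENNReal.ofReal B)
    (hSapprox : maxVal f (feasibleLight f c B) ≤ γ * f S) :
    ∃ T : Finset α,
      payment f c T ≤ ENNReal.ofReal B ∧
      (T.card = 1 ∨ T ⊆ S) ∧
      maxVal φ (feasible f c B) ≤ (6 * γ + 1) * φ T := by
  have hf X : 0 ≤ f X := (hf01 X).1
  have hB : ENNReal.ofReal B ≤ 1 := ENNReal.ofReal_le_one.2 hB1
  obtain ⟨T, hTS, hT, hST⟩ :=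
    exists_subset_payment_le_half_reward_le hf hmono hsubmod hSL (hSfeas.trans hB)
  have hTfeas := (payment_mono hsubmod hTS).trans hSfeas
  have hφT := hφ.1 T
  have hlight (X : Finset α) (hX : feasibleLight f c B X) : f X ≤ γ * (6 * φ T) :=
    calc f X ≤ maxVal f (feasibleLight f c B) := le_maxVal hX
      _ ≤ γ * f S := hSapprox
      _ ≤ γ * (6 * φ T) := by gcongr; linarith [hφ.reward_le_two_mul (hf T) hT]
  obtain ⟨O, hO, hOmax⟩ :=
    exists_maxVal_le (φ := φ) (P := feasible f c B) ⟨∅, by simp [feasible, payment]⟩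
  rcases forall_isLight_or_exists_forall_erase_isLight hsubmod (hO.trans hB) with
    hOL | ⟨i, hiO, hOL⟩
  · exact ⟨T, hTfeas, Or.inr hTS, by nlinarith [hφ.2.1 O, hlight O ⟨hOL, hO⟩]⟩
  have hrest := hlight (O.erase i) ⟨hOL, (payment_mono hsubmod (Finset.erase_subset i O)).trans hO⟩
  have hOi := hφ.2.2.2 O i hiO
  rcases le_total (φ {i}) (φ T) with h | h
  · exact ⟨T, hTfeas, Or.inr hTS, by nlinarith⟩
  · exact ⟨{i}, (payment_mono hsubmod (Finset.singleton_subset_iff.2 hiO)).trans hO,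
      Or.inl (Finset.card_singleton i), by nlinarith⟩

/-- **Reduction to Max-Reward-Light (submodular case, improved constant).** -/
theorem reduction_to_mrl_submodular {α : Type*} [DecidableEq α] [Fintype α] [Nonempty α]
    (f : Finset α → ℝ) (c : α → ℝ) (φ : Finset α → ℝ)
    (hf01 : ∀ S, f S ∈ Set.Icc (0 : ℝ) 1) (hf0 : f ∅ = 0)
    (hmono : IsMonotoneFn f) (hsubmod : IsSubmodular f) (hc : ∀ i, 0 ≤ c i)
    (hφ : IsBEST f c φ)
    (B : ℝ) (hB0 : 0 < B) (hB1 : B ≤ 1)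
    (γ : ℝ) (hγ : 1 ≤ γ)
    (S : Finset α) (hSL : ∀ i ∈ S, isLight f c i)
    (hSfeas : payment f c S ≤ ENNReal.ofReal B)
    (hSapprox : maxVal f (feasibleLight f c B) ≤ γ * f S) :
    ∃ T : Finset α,
      payment f c T ≤ ENNReal.ofReal B ∧
      (T.card = 1 ∨ T ⊆ S) ∧
      maxVal φ (feasible f c B) ≤ (6 * γ + 1) * φ T :=
  reduction_to_mrl_submodular_general f c φ hf01 hmono hsubmod hφ B hB1 γ hγ S hSL hSfeas hSapprox
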